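/- The Lie algebra g^(3) on ℝ^9 = ℝ^3 ⊕ ℝ^3 ⊕ ℝ^3 with bracket [(y,x,z),(y',x',z')] = (y∧y', y∧x' − y'∧x, y∧z' − y'∧z + x∧x') is not isomorphic to the semidirect product su(2) ⋉ (ℝ^3 ⊕ ℝ^3) with bracket [(y,x,z),(y',x',z')] = (y∧y', y∧x' − y'∧x, y∧z' − y'∧z); concretely, in g^(3) the derived subalgebra of the ideal I = {(0,x,z)} is nonzero, while in the semidirect product the corresponding ideal is abelian. -/

import Mathlib

/-!
An isomorphism preserves the elements `u` with `ad_u³ = 0`. In `g^(3)` every `u ∈ I = {(0, x, z)}`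
is such an element, while in the semidirect product `ad_p³` acts on the last factor as `a ↦ p.1 × a`
cubed, which is `-|p.1|² (p.1 × ·)` and hence vanishes only when `p.1 = 0`. An isomorphism
therefore maps `I` into the abelian ideal `{(0, x, z)}` of the semidirect product, which is
impossible since `[(0, e₀, 0), (0, e₁, 0)] = (0, 0, e₂) ≠ 0` in `g^(3)`.
-/

open Matrix

noncomputable section

/-- The Lie bracket of `g^(3)`. -/
def g3Bracket (u v : (Fin 3 → ℝ) × (Fin 3 → ℝ) × (Fin 3 → ℝ)) :
    (Fin 3 → ℝ) × (Fin 3 → ℝ) × (Fin 3 → ℝ) :=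
  (u.1 ⨯₃ v.1,
   u.1 ⨯₃ v.2.1 - v.1 ⨯₃ u.2.1,
   u.1 ⨯₃ v.2.2 - v.1 ⨯₃ u.2.2 + u.2.1 ⨯₃ v.2.1)

/-- The bracket of the semidirect product `su(2) ⋉ (ℝ³ ⊕ ℝ³)`. -/
def sdBracket (u v : (Fin 3 → ℝ) × (Fin 3 → ℝ) × (Fin 3 → ℝ)) :
    (Fin 3 → ℝ) × (Fin 3 → ℝ) × (Fin 3 → ℝ) :=
  (u.1 ⨯₃ v.1,
   u.1 ⨯₃ v.2.1 - v.1 ⨯₃ u.2.1,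
   u.1 ⨯₃ v.2.2 - v.1 ⨯₃ u.2.2)

theorem LinearEquiv.iterate_eq_zero_of_map_bracket {R M N : Type*} [Semiring R]
    [AddCommMonoid M] [Module R M] [AddCommMonoid N] [Module R N] (e : M ≃ₗ[R] N)
    {B : M → M → M} {B' : N → N → N} (he : ∀ u v, e (B u v) = B' (e u) (e v))
    {u : M} {n : ℕ} (hu : ∀ w, (B u)^[n] w = 0) (w : N) : (B' (e u))^[n] w = 0 := by
  have hsemiconj : Function.Semiconj e (B u) (B' (e u)) := he u
  rw [← e.apply_symm_apply w, ← hsemiconj.iterate_right n, hu, map_zero]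

section CrossProduct

theorem cross_cross_cross_self {R : Type*} [CommRing R] (a b : Fin 3 → R) :
    a ⨯₃ (a ⨯₃ (a ⨯₃ b)) = -((a ⬝ᵥ a) • (a ⨯₃ b)) := by
  rw [cross_cross_eq_smul_sub_smul', dot_self_cross, zero_smul, zero_sub]

theorem eq_zero_of_forall_cross_eq_zero {R : Type*} [CommRing R] {a : Fin 3 → R}
    (h : ∀ b, a ⨯₃ b = 0) : a = 0 := by
  have h₀ := h ![1, 0, 0]
  have h₁ := h ![0, 1, 0]
  simp [cross_apply] at h₀ h₁
  ext i
  fin_cases i <;> simp [h₀, h₁]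

theorem eq_zero_of_forall_cross_cross_cross_eq_zero {R : Type*} [CommRing R] [LinearOrder R]
    [IsStrictOrderedRing R] {a : Fin 3 → R} (h : ∀ b, a ⨯₃ (a ⨯₃ (a ⨯₃ b)) = 0) : a = 0 := by
  by_contra ha
  have hdot : a ⬝ᵥ a ≠ 0 := dotProduct_self_eq_zero.not.mpr ha
  refine ha (eq_zero_of_forall_cross_eq_zero fun b => ?_)
  simpa [cross_cross_cross_self, hdot] using h b

end CrossProduct

abbrev R9 := (Fin 3 → ℝ) × (Fin 3 → ℝ) × (Fin 3 → ℝ)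

theorem g3Bracket_iterate_three_eq_zero {u : R9} (hu : u.1 = 0) (w : R9) :
    (g3Bracket u)^[3] w = 0 := by
  simp [g3Bracket, hu]

theorem g3Bracket_middle_middle (x x' : Fin 3 → ℝ) :
    g3Bracket (0, x, 0) (0, x', 0) = (0, 0, x ⨯₃ x') := by
  simp [g3Bracket]

theorem g3Bracket_middle_middle_ne_zero :
    g3Bracket (0, ![1, 0, 0], 0) (0, ![0, 1, 0], 0) ≠ 0 := by
  rw [g3Bracket_middle_middle]
  simp [cross_apply]

theorem sdBracket_eq_zero {u v : R9} (hu : u.1 = 0) (hv : v.1 = 0) : sdBracket u v = 0 := by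
  simp [sdBracket, hu, hv]

theorem fst_eq_zero_of_sdBracket_iterate_three_eq_zero {p : R9}
    (hp : ∀ w, (sdBracket p)^[3] w = 0) : p.1 = 0 := by
  refine eq_zero_of_forall_cross_cross_cross_eq_zero fun b => ?_
  simpa [sdBracket] using congrArg (·.2.2) (hp (0, 0, b))

/-- `g^(3)` is not isomorphic to the semidirect product `su(2) ⋉ (ℝ³ ⊕ ℝ³)`:
no linear equivalence of `ℝ⁹` intertwines the two brackets.  Concretely, in
`g^(3)` the derived subalgebra of the ideal `I = {(0,x,z)}` is nonzero
(e.g. `[(0,x,0),(0,x',0)] = (0,0,x∧x')`), while in the semidirect product the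
corresponding ideal is abelian. -/
theorem stmt19 :
    (¬ ∃ e : ((Fin 3 → ℝ) × (Fin 3 → ℝ) × (Fin 3 → ℝ)) ≃ₗ[ℝ]
        ((Fin 3 → ℝ) × (Fin 3 → ℝ) × (Fin 3 → ℝ)),
      ∀ u v, e (g3Bracket u v) = sdBracket (e u) (e v)) ∧
    (∃ u v, u.1 = 0 ∧ v.1 = 0 ∧ g3Bracket u v ≠ 0) ∧
    (∀ x x' : Fin 3 → ℝ,
      g3Bracket (0, x, 0) (0, x', 0) = (0, 0, x ⨯₃ x')) ∧
    (∀ u v, u.1 = 0 → v.1 = 0 → sdBracket u v = 0) := by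
  refine ⟨?_, ⟨_, _, rfl, rfl, g3Bracket_middle_middle_ne_zero⟩, g3Bracket_middle_middle,
    fun _ _ => sdBracket_eq_zero⟩
  rintro ⟨e, he⟩
  have hI : ∀ u : R9, u.1 = 0 → (e u).1 = 0 := fun u hu =>
    fst_eq_zero_of_sdBracket_iterate_three_eq_zero
      (e.iterate_eq_zero_of_map_bracket he (g3Bracket_iterate_three_eq_zero hu))
  apply g3Bracket_middle_middle_ne_zero
  rw [← e.map_eq_zero_iff, he]
  exact sdBracket_eq_zero (hI _ rfl) (hI _ rfl)
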